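/- arXiv:1405.3078 — 3 statements merged into one kernel-verified Lean document; each statement's English description precedes it below -/
import Mathlib

section
/- Let N be a nilpotent endomorphism of a finite-dimensional real vector space V with N^{k+1} = 0. Then there exists at most one increasing filtration W_0 ⊆ W_1 ⊆ ... ⊆ W_{2k} = V of subspaces such that N(W_ℓ) ⊆ W_{ℓ-2} for all ℓ, and the map induced by N^ℓ from W_{k+ℓ}/W_{k+ℓ-1} to W_{k-ℓ}/W_{k-ℓ-1} is an isomorphism for all 0 ≤ ℓ ≤ k. -/
/-- `W : ℤ → Submodule ℝ V` is a weight filtration of the nilpotent endomorphism `N`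
(with `N ^ (k+1) = 0`) centered at `k`: it is increasing, with `W ℓ = 0` for `ℓ < 0` and
`W ℓ = V` for `ℓ ≥ 2k`, satisfies `N (W ℓ) ⊆ W (ℓ - 2)`, and for every `0 ≤ ℓ ≤ k` the map
induced by `N ^ ℓ` from `Gr_{k+ℓ} W = W_{k+ℓ}/W_{k+ℓ-1}` to `Gr_{k-ℓ} W = W_{k-ℓ}/W_{k-ℓ-1}`
is an isomorphism (surjectivity and injectivity of the induced graded map are expressed
elementwise modulo the lower step of the filtration). -/
def IsWeightFiltration (V : Type*) [AddCommGroup V] [Module ℝ V]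
    (k : ℕ) (N : Module.End ℝ V) (W : ℤ → Submodule ℝ V) : Prop :=
  Monotone W ∧
  (∀ ℓ : ℤ, ℓ < 0 → W ℓ = ⊥) ∧
  (∀ ℓ : ℤ, 2 * (k : ℤ) ≤ ℓ → W ℓ = ⊤) ∧
  (∀ ℓ : ℤ, (W ℓ).map N ≤ W (ℓ - 2)) ∧
  (∀ ℓ : ℕ, ℓ ≤ k →
    (∀ v ∈ W ((k : ℤ) - ℓ), ∃ u ∈ W ((k : ℤ) + ℓ),
        v - (N ^ ℓ) u ∈ W ((k : ℤ) - ℓ - 1)) ∧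
    (∀ u ∈ W ((k : ℤ) + ℓ), (N ^ ℓ) u ∈ W ((k : ℤ) - ℓ - 1) → u ∈ W ((k : ℤ) + ℓ - 1)))

/-- Iterating the compatibility of `N` with the filtration: `N ^ ℓ` maps `W m` into
`W (m - 2ℓ)`. -/
lemma IsWeightFiltration.pow_mem {V : Type*} [AddCommGroup V] [Module ℝ V]
    {k : ℕ} {N : Module.End ℝ V} {W : ℤ → Submodule ℝ V}
    (h : IsWeightFiltration V k N W) :
    ∀ (ℓ : ℕ) (m : ℤ) (v : V), v ∈ W m → (N ^ ℓ) v ∈ W (m - 2 * ℓ) := by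
  intro ℓ
  induction ℓ with
  | zero => intro m v hv; simpa using hv
  | succ n ih =>
    intro m v hv
    have h1 : (N ^ n) v ∈ W (m - 2 * n) := ih m v hv
    have h2 : N ((N ^ n) v) ∈ W (m - 2 * n - 2) :=
      h.2.2.2.1 _ (Submodule.mem_map_of_mem h1)
    have e : m - 2 * (n : ℤ) - 2 = m - 2 * ((n + 1 : ℕ) : ℤ) := by push_cast; ring
    have e2 : (N ^ (n + 1)) v = N ((N ^ n) v) := by
      rw [pow_succ']; rfl
    rw [e2, ← e]
    exact h2

/-- The inductive step: if two weight filtrations agree at level `k + ℓ` and at level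
`k - ℓ - 1`, then `W (k + ℓ - 1) ≤ W' (k + ℓ - 1)` and `W (k - ℓ) ≤ W' (k - ℓ)`. -/
lemma step_le {V : Type*} [AddCommGroup V] [Module ℝ V]
    {k : ℕ} {N : Module.End ℝ V} {W W' : ℤ → Submodule ℝ V}
    (h : IsWeightFiltration V k N W) (h' : IsWeightFiltration V k N W')
    (ℓ : ℕ) (hℓ : ℓ ≤ k)
    (hup : W ((k : ℤ) + ℓ) = W' ((k : ℤ) + ℓ))
    (hlo : W ((k : ℤ) - ℓ - 1) = W' ((k : ℤ) - ℓ - 1)) :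
    W ((k : ℤ) + ℓ - 1) ≤ W' ((k : ℤ) + ℓ - 1) ∧ W ((k : ℤ) - ℓ) ≤ W' ((k : ℤ) - ℓ) := by
  constructor
  · intro u hu
    have hu1 : u ∈ W' ((k : ℤ) + ℓ) := hup ▸ h.1 (by omega) hu
    have hNu : (N ^ ℓ) u ∈ W ((k : ℤ) + ℓ - 1 - 2 * ℓ) := h.pow_mem ℓ _ u hu
    have e : (k : ℤ) + ℓ - 1 - 2 * ℓ = (k : ℤ) - ℓ - 1 := by ring
    rw [e, hlo] at hNu
    exact (h'.2.2.2.2 ℓ hℓ).2 u hu1 hNu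
  · intro v hv
    obtain ⟨u, hu, hvu⟩ := (h.2.2.2.2 ℓ hℓ).1 v hv
    have hu' : u ∈ W' ((k : ℤ) + ℓ) := hup ▸ hu
    have hNu : (N ^ ℓ) u ∈ W' ((k : ℤ) + ℓ - 2 * ℓ) := h'.pow_mem ℓ _ u hu'
    have e : (k : ℤ) + ℓ - 2 * ℓ = (k : ℤ) - ℓ := by ring
    rw [e] at hNu
    have hvu' : v - (N ^ ℓ) u ∈ W' ((k : ℤ) - ℓ) := h'.1 (by omega) (hlo ▸ hvu)
    have := (W' ((k : ℤ) - ℓ)).add_mem hvu' hNu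
    simpa using this

/-- **Uniqueness of the weight filtration.**
Let `N` be a nilpotent endomorphism of a finite-dimensional real vector space `V` with
`N^(k+1) = 0`.  There is at most one increasing filtration
`W_0 ⊆ W_1 ⊆ ⋯ ⊆ W_{2k} = V` with `N (W ℓ) ⊆ W (ℓ-2)` such that `N ^ ℓ` induces an
isomorphism `Gr_{k+ℓ} W ≃ Gr_{k-ℓ} W` for all `0 ≤ ℓ ≤ k`. -/
theorem weight_filtration_unique
    (V : Type*) [AddCommGroup V] [Module ℝ V] [FiniteDimensional ℝ V]
    (k : ℕ) (N : Module.End ℝ V) (hN : N ^ (k + 1) = 0)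
    (W W' : ℤ → Submodule ℝ V)
    (hW : IsWeightFiltration V k N W) (hW' : IsWeightFiltration V k N W') :
    ∀ ℓ : ℤ, W ℓ = W' ℓ := by
  have key : ∀ i : ℕ, i ≤ k →
      W (2 * (k : ℤ) - i) = W' (2 * (k : ℤ) - i) ∧ W ((i : ℤ) - 1) = W' ((i : ℤ) - 1) := by
    intro i
    induction i with
    | zero =>
      intro _
      refine ⟨?_, ?_⟩
      · rw [hW.2.2.1 _ (by omega), hW'.2.2.1 _ (by omega)]
      · rw [hW.2.1 _ (by omega), hW'.2.1 _ (by omega)]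
    | succ n ih =>
      intro hn
      obtain ⟨h1, h2⟩ := ih (by omega)
      set ℓ := k - n with hℓdef
      have hℓk : ℓ ≤ k := by omega
      have e1 : (k : ℤ) + ℓ = 2 * (k : ℤ) - n := by omega
      have e2 : (k : ℤ) + ℓ - 1 = 2 * (k : ℤ) - ((n + 1 : ℕ) : ℤ) := by push_cast; omega
      have e3 : (k : ℤ) - ℓ - 1 = (n : ℤ) - 1 := by omega
      have e4 : (k : ℤ) - ℓ = ((n + 1 : ℕ) : ℤ) - 1 := by push_cast; omega
      have hup : W ((k : ℤ) + ℓ) = W' ((k : ℤ) + ℓ) := by rw [e1]; exact h1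
      have hlo : W ((k : ℤ) - ℓ - 1) = W' ((k : ℤ) - ℓ - 1) := by rw [e3]; exact h2
      obtain ⟨a1, a2⟩ := step_le hW hW' ℓ hℓk hup hlo
      obtain ⟨b1, b2⟩ := step_le hW' hW ℓ hℓk hup.symm hlo.symm
      exact ⟨by rw [← e2]; exact le_antisymm a1 b1, by rw [← e4]; exact le_antisymm a2 b2⟩
  intro m
  rcases lt_or_ge m 0 with hm | hm
  · rw [hW.2.1 m hm, hW'.2.1 m hm]
  rcases le_or_gt (2 * (k : ℤ)) m with hm2 | hm2
  · rw [hW.2.2.1 m hm2, hW'.2.2.1 m hm2]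
  rcases le_or_gt (k : ℤ) m with hmk | hmk
  · have h := (key (2 * (k : ℤ) - m).toNat (by omega)).1
    have e : 2 * (k : ℤ) - ((2 * (k : ℤ) - m).toNat : ℤ) = m := by omega
    rwa [e] at h
  · have h := (key (m + 1).toNat (by omega)).2
    have e : (((m + 1).toNat : ℤ)) - 1 = m := by omega
    rwa [e] at h
end

section
/- Let N be a nilpotent endomorphism of a finite-dimensional real vector space V with N^{k+1} = 0. Then there exists an increasing filtration W_0 ⊆ W_1 ⊆ ... ⊆ W_{2k} = V such that N(W_ℓ) ⊆ W_{ℓ-2} for all ℓ, and N^ℓ induces an isomorphism Gr_{k+ℓ} W → Gr_{k-ℓ} W for all 0 ≤ ℓ ≤ k. -/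
/-- If the `k`-th power of `N` kills `u`, then `u` lies in `W (2k-1)`; this follows from
the injectivity half of the graded condition at `ℓ = k`. -/
lemma IsWeightFiltration.mem_of_pow_eq_zero {V : Type*} [AddCommGroup V] [Module ℝ V]
    {k : ℕ} {N : Module.End ℝ V} {W : ℤ → Submodule ℝ V}
    (h : IsWeightFiltration V k N W) {u : V} (hu : (N ^ k) u = 0) :
    u ∈ W ((k : ℤ) + k - 1) := by
  obtain ⟨-, hbot, htop, -, hgr⟩ := h
  exact (hgr k le_rfl).2 u (by rw [htop _ (by omega)]; trivial)
    (by rw [hu]; exact Submodule.zero_mem _)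

theorem weight_filtration_exists_aux (k : ℕ) :
    ∀ (V : Type u) [AddCommGroup V] [Module ℝ V] [FiniteDimensional ℝ V]
      (N : Module.End ℝ V), N ^ (k + 1) = 0 →
      ∃ W : ℤ → Submodule ℝ V, IsWeightFiltration V k N W := by
  induction k with
  | zero =>
    intro V _ _ _ N hN
    have hN0 : N = 0 := by simpa using hN
    refine ⟨fun ℓ => if ℓ < 0 then ⊥ else ⊤, ?_, ?_, ?_, ?_, ?_⟩
    · intro a b hab
      dsimp only
      split_ifs with h1 h2 <;> first | exact le_rfl | exact bot_le | omega
    · intro ℓ h; simp [h]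
    · intro ℓ h; dsimp only; rw [if_neg (by omega)]
    · intro ℓ v hv
      obtain ⟨x, -, rfl⟩ := hv
      rw [hN0]
      exact Submodule.zero_mem _
    · intro ℓ hℓ
      interval_cases ℓ
      constructor
      · intro v hv
        refine ⟨v, ?_, ?_⟩
        · simpa using hv
        · simp
      · intro u hu h0
        simp only [Nat.cast_zero, pow_zero, Module.End.one_apply] at h0 ⊢
        exact h0
  | succ m IH =>
    intro V _ _ _ N hN
    set k : ℕ := m + 1 with hk
    have hNcomm : ∀ v : V, (N ^ k) (N v) = N ((N ^ k) v) := by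
      intro v
      rw [← Module.End.mul_apply, ← Module.End.mul_apply, ← pow_succ, ← pow_succ']
    have hNk1 : ∀ v : V, (N ^ k) (N v) = 0 := by
      intro v
      rw [← Module.End.mul_apply, ← pow_succ]
      rw [hN]; rfl
    set S : Submodule ℝ V := LinearMap.ker (N ^ k) with hSdef
    have hNS : ∀ x ∈ S, N x ∈ S := by
      intro x hx
      simp only [hSdef, LinearMap.mem_ker] at *
      rw [hNcomm, hx, map_zero]
    have hNvS : ∀ v : V, N v ∈ S := fun v => LinearMap.mem_ker.mpr (hNk1 v)
    set Nr : S →ₗ[ℝ] S := N.restrict hNS with hNrdef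
    set T' : Submodule ℝ S := (LinearMap.range (N ^ k)).comap S.subtype with hT'def
    have hmemT' : ∀ x : S, x ∈ T' ↔ (x : V) ∈ LinearMap.range (N ^ k) := fun x => Iff.rfl
    have hNrT' : T' ≤ T'.comap Nr := by
      intro x hx
      obtain ⟨w, hw⟩ := (hmemT' x).mp hx
      refine Submodule.mem_comap.mpr ((hmemT' _).mpr ⟨N w, ?_⟩)
      rw [hNrdef, LinearMap.restrict_coe_apply, ← hw, hNcomm]
    set N' : Module.End ℝ (S ⧸ T') := Submodule.mapQ T' T' Nr hNrT' with hN'def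
    have hvalr : ∀ (j : ℕ) (x : S), ((Nr ^ j) x : V) = (N ^ j) (x : V) := by
      intro j x
      rw [hNrdef, Module.End.pow_restrict, LinearMap.restrict_coe_apply]
    have hcomm : ∀ (j : ℕ) (x : S), (N' ^ j) (T'.mkQ x) = T'.mkQ ((Nr ^ j) x) := by
      intro j
      induction j with
      | zero => intro x; simp
      | succ j ih =>
        intro x
        rw [pow_succ', Module.End.mul_apply, ih, Submodule.mkQ_apply, hN'def,
          Submodule.mapQ_apply, ← Submodule.mkQ_apply, pow_succ', Module.End.mul_apply]
    have hN'pow : N' ^ (m + 1) = 0 := by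
      apply LinearMap.ext
      intro y
      obtain ⟨x, rfl⟩ := T'.mkQ_surjective y
      rw [hcomm]
      rw [Submodule.mkQ_apply, LinearMap.zero_apply, Submodule.Quotient.mk_eq_zero]
      refine (hmemT' _).mpr ⟨0, ?_⟩
      rw [map_zero, hvalr]
      exact (LinearMap.mem_ker.mp x.2).symm
    obtain ⟨W', hW'⟩ := IH (S ⧸ T') N' hN'pow
    have hker' : ∀ y : S ⧸ T', (N' ^ m) y = 0 → y ∈ W' ((m : ℤ) + m - 1) :=
      fun y hy => hW'.mem_of_pow_eq_zero hy
    obtain ⟨h'mono, h'bot, h'top, h'map, h'gr⟩ := hW'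
    set W : ℤ → Submodule ℝ V := fun ℓ =>
      if ℓ < 0 then ⊥ else if 2 * (k : ℤ) ≤ ℓ then ⊤
      else ((W' (ℓ - 1)).comap T'.mkQ).map S.subtype with hWdef
    have memW : ∀ {ℓ : ℤ}, 0 ≤ ℓ → ℓ < 2 * (k : ℤ) → ∀ {v : V},
        (v ∈ W ℓ ↔ ∃ x : S, T'.mkQ x ∈ W' (ℓ - 1) ∧ (x : V) = v) := by
      intro ℓ h0 h2 v
      simp only [hWdef]
      rw [if_neg (by omega), if_neg (by omega)]
      simp [Submodule.mem_map, Submodule.mem_comap]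
    have hWbot : ∀ ℓ : ℤ, ℓ < 0 → W ℓ = ⊥ := by
      intro ℓ h; simp only [hWdef]; rw [if_pos h]
    have hWtop : ∀ ℓ : ℤ, 2 * (k : ℤ) ≤ ℓ → W ℓ = ⊤ := by
      intro ℓ h; simp only [hWdef]; rw [if_neg (by omega), if_pos h]
    have hWmono : Monotone W := by
      apply monotone_int_of_le_succ
      intro ℓ
      rcases lt_or_ge ℓ 0 with h0 | h0
      · rw [hWbot ℓ h0]; exact bot_le
      rcases le_or_gt (2 * (k : ℤ)) (ℓ + 1) with h2 | h2
      · rw [hWtop _ h2]; exact le_top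
      · simp only [hWdef]
        rw [if_neg (by omega), if_neg (by omega), if_neg (by omega), if_neg (by omega)]
        exact Submodule.map_mono (Submodule.comap_mono (h'mono (by omega)))
    -- N kills W 1
    have hW1 : ∀ x : S, T'.mkQ x ∈ W' 0 → N (x : V) = 0 := by
      intro x hx
      obtain ⟨u', hu', hsub⟩ := (h'gr m le_rfl).1 (T'.mkQ x)
        (by rwa [show (m : ℤ) - m = 0 by omega])
      rw [h'bot _ (by omega), Submodule.mem_bot, sub_eq_zero] at hsub
      obtain ⟨y, rfl⟩ := T'.mkQ_surjective u'
      rw [hcomm m y] at hsub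
      have hT : x - (Nr ^ m) y ∈ T' := by
        rwa [Submodule.mkQ_apply, Submodule.mkQ_apply, Submodule.Quotient.eq] at hsub
      obtain ⟨w, hw⟩ := (hmemT' _).mp hT
      have h2 : (x : V) - (N ^ m) (y : V) = (N ^ k) w := by
        rw [hw]; push_cast [hvalr]; abel
      have hxval : (x : V) = (N ^ m) (y : V) + (N ^ k) w := by
        rw [← h2]; abel
      have h1 : N ((N ^ m) (y : V)) = 0 := by
        rw [← Module.End.mul_apply, ← pow_succ']
        exact LinearMap.mem_ker.mp y.2
      have h2 : N ((N ^ k) w) = 0 := by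
        rw [← Module.End.mul_apply, ← pow_succ']
        rw [hN]; rfl
      rw [hxval, map_add, h1, h2, add_zero]
    -- N of anything lands in W (2m)
    have hNtop : ∀ v : V, T'.mkQ ⟨N v, hNvS v⟩ ∈ W' ((m : ℤ) + m - 1) := by
      intro v
      apply hker'
      rw [hcomm, Submodule.mkQ_apply, Submodule.Quotient.mk_eq_zero]
      refine (hmemT' _).mpr ⟨v, ?_⟩
      rw [hvalr]
      show (N ^ (m + 1)) v = (N ^ m) (N v)
      rw [pow_succ, Module.End.mul_apply]
    have hWmap : ∀ ℓ : ℤ, (W ℓ).map N ≤ W (ℓ - 2) := by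
      intro ℓ v hv
      obtain ⟨x, hx, rfl⟩ := hv
      by_cases hc0 : ℓ < 0
      · rw [hWbot ℓ hc0] at hx
        have hx0 : x = 0 := by simpa using hx
        subst hx0
        rw [map_zero]
        exact Submodule.zero_mem _
      by_cases hc1 : ℓ < 2
      · -- ℓ ∈ {0,1} : show N x = 0
        have hx1 : x ∈ W 1 := hWmono (by omega : ℓ ≤ 1) hx
        obtain ⟨y, hy, rfl⟩ := (memW (by omega) (by omega)).mp hx1
        rw [show (1 : ℤ) - 1 = 0 by norm_num] at hy
        rw [hW1 y hy]
        exact Submodule.zero_mem _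
      by_cases hc2 : 2 * (k : ℤ) ≤ ℓ
      · by_cases hc3 : 2 * (k : ℤ) ≤ ℓ - 2
        · rw [hWtop _ hc3]; trivial
        · have hm : N x ∈ W (2 * (m : ℤ)) := by
            refine (memW (by omega) (by omega)).mpr ⟨⟨N x, hNvS x⟩, ?_, rfl⟩
            rw [show 2 * (m : ℤ) - 1 = (m : ℤ) + m - 1 by omega]
            exact hNtop x
          exact hWmono (by omega) hm
      · -- 2 ≤ ℓ < 2k
        obtain ⟨y, hy, rfl⟩ := (memW (by omega) (by omega)).mp hx
        refine (memW (by omega) (by omega)).mpr ⟨Nr y, ?_, ?_⟩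
        · have hNy : T'.mkQ (Nr y) = N' (T'.mkQ y) := by
            rw [Submodule.mkQ_apply, Submodule.mkQ_apply, hN'def, Submodule.mapQ_apply]
          rw [hNy, show ℓ - 2 - 1 = ℓ - 1 - 2 by omega]
          exact h'map (ℓ - 1) ⟨T'.mkQ y, hy, rfl⟩
        · rw [hNrdef, LinearMap.restrict_coe_apply]
    have hWgr : ∀ ℓ : ℕ, ℓ ≤ k →
        (∀ v ∈ W ((k : ℤ) - ℓ), ∃ u ∈ W ((k : ℤ) + ℓ),
            v - (N ^ ℓ) u ∈ W ((k : ℤ) - ℓ - 1)) ∧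
        (∀ u ∈ W ((k : ℤ) + ℓ), (N ^ ℓ) u ∈ W ((k : ℤ) - ℓ - 1) →
            u ∈ W ((k : ℤ) + ℓ - 1)) := by
      intro ℓ hℓ
      by_cases hl0 : ℓ = 0
      · subst hl0
        constructor
        · intro v hv
          refine ⟨v, ?_, ?_⟩
          · simp only [Nat.cast_zero, add_zero]
            simpa using hv
          · rw [pow_zero, Module.End.one_apply, sub_self]
            exact Submodule.zero_mem _
        · intro u hu h0
          rw [pow_zero, Module.End.one_apply] at h0
          simp only [Nat.cast_zero, add_zero, sub_zero] at h0 ⊢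
          exact h0
      by_cases hlk : ℓ = k
      · subst hlk
        constructor
        · intro v hv
          have hv0 : v ∈ W 0 := by rwa [show (k : ℤ) - (k : ℕ) = 0 by omega] at hv
          obtain ⟨x, hx, rfl⟩ := (memW le_rfl (by omega)).mp hv0
          rw [h'bot _ (by norm_num), Submodule.mem_bot] at hx
          have hxT : x ∈ T' := by
            rwa [Submodule.mkQ_apply, Submodule.Quotient.mk_eq_zero] at hx
          obtain ⟨w, hw⟩ := (hmemT' x).mp hxT
          refine ⟨w, ?_, ?_⟩
          · rw [hWtop _ (by omega)]; trivial
          · have hzero : (x : V) - (N ^ k) w = 0 := by rw [hw, sub_self]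
            rw [hzero]
            exact Submodule.zero_mem _
        · intro u hu hk0
          have h0 : (N ^ k) u ∈ W (-1) := by
            rwa [show (k : ℤ) - (k : ℕ) - 1 = -1 by omega] at hk0
          rw [hWbot _ (by norm_num)] at h0
          have h0' : (N ^ k) u = 0 := by simpa using h0
          refine (memW (ℓ := (k : ℤ) + (k : ℕ) - 1) (by omega) (by omega)).mpr
            ⟨⟨u, LinearMap.mem_ker.mpr h0'⟩, ?_, rfl⟩
          rw [h'top _ (by omega)]; trivial
      · have hl1 : 1 ≤ ℓ := Nat.one_le_iff_ne_zero.mpr hl0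
        have hlm : ℓ ≤ m := by omega
        constructor
        · intro v hv
          obtain ⟨x, hx, rfl⟩ := (memW (by omega) (by omega)).mp hv
          obtain ⟨u', hu', hsub⟩ := (h'gr ℓ hlm).1 (T'.mkQ x)
            (by rwa [show (m : ℤ) - ℓ = (k : ℤ) - ℓ - 1 by omega])
          obtain ⟨y, rfl⟩ := T'.mkQ_surjective u'
          refine ⟨(y : V), ?_, ?_⟩
          · refine (memW (by omega) (by omega)).mpr ⟨y, ?_, rfl⟩
            rwa [show (k : ℤ) + ℓ - 1 = (m : ℤ) + ℓ by omega]
          · refine (memW (by omega) (by omega)).mpr ⟨x - (Nr ^ ℓ) y, ?_, ?_⟩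
            · rw [map_sub, ← hcomm]
              rwa [show (k : ℤ) - ℓ - 1 - 1 = (m : ℤ) - ℓ - 1 by omega]
            · push_cast [hvalr]
              rfl
        · intro u hu hul
          obtain ⟨x, hx, hxu⟩ := (memW (by omega) (by omega)).mp hu
          obtain ⟨z, hz, hzu⟩ := (memW (by omega) (by omega)).mp hul
          have hzx : z = (Nr ^ ℓ) x := Subtype.ext (by rw [hzu, hvalr, hxu])
          have hres := (h'gr ℓ hlm).2 (T'.mkQ x)
            (by rwa [show (m : ℤ) + ℓ = (k : ℤ) + ℓ - 1 by omega])
            (by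
              rw [hcomm, ← hzx]
              rwa [show (m : ℤ) - ℓ - 1 = (k : ℤ) - ℓ - 1 - 1 by omega])
          subst hxu
          refine (memW (by omega) (by omega)).mpr ⟨x, ?_, rfl⟩
          rwa [show (k : ℤ) + ℓ - 1 - 1 = (m : ℤ) + ℓ - 1 by omega]
    exact ⟨W, hWmono, hWbot, hWtop, hWmap, hWgr⟩

/-- **Existence of the weight filtration.**
Let `N` be a nilpotent endomorphism of a finite-dimensional real vector space `V` with
`N^(k+1) = 0`.  Then there exists an increasing filtration
`W_0 ⊆ W_1 ⊆ ⋯ ⊆ W_{2k} = V` with `N (W ℓ) ⊆ W (ℓ-2)` such that `N ^ ℓ` induces an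
isomorphism `Gr_{k+ℓ} W ≃ Gr_{k-ℓ} W` for all `0 ≤ ℓ ≤ k`. -/
theorem weight_filtration_exists
    (V : Type*) [AddCommGroup V] [Module ℝ V] [FiniteDimensional ℝ V]
    (k : ℕ) (N : Module.End ℝ V) (hN : N ^ (k + 1) = 0) :
    ∃ W : ℤ → Submodule ℝ V, IsWeightFiltration V k N W :=
  weight_filtration_exists_aux k V N hN
end

section
/- Let Q be a nondegenerate (-1)^k-symmetric bilinear form on a finite-dimensional real vector space V, N ∈ End(V) nilpotent with Q(Nu,v) = -Q(u,Nv), and let {M,Y,N} be a standard triple inside the Lie algebra of Q-skew endomorphisms. Then for each ℓ ≥ 0, the form Q_ℓ(u,v) = Q(u, N^ℓ v) restricted to the highest weight space P(ℓ) is nondegenerate. -/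
/-!
By the Lefschetz decomposition `V = ∑_{i,j} N^j P(i)` it suffices to show `Q(u, N^j q) = 0` for
`u ∈ P(ℓ)` and `q ∈ P(i)`. As `Y` is `Q`-skew this is automatic unless the weights match,
`i + ℓ = 2j`. Then `N^j q = 0` if `i < ℓ`, `Q(u, N^j q) = ±Q(N^j u, q) = 0` if `i > ℓ`,
and `i = ℓ` is the hypothesis.

For the decomposition: if `x ∈ ker M` and `N^(k+1) x = 0` then `N^k (Y - k) x = 0`, so by
induction on `k` the operator `Y` acts on `ker M` semisimply with eigenvalues in `ℕ`. It remains
to see `ker M + im N = V`, which, applied to the dual representation, follows from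
`ker M ∩ im N = 0`. A nonzero primitive vector `N y` of weight `i` would have a preimage `y` of
weight `i + 2`, and then `N M^(k+1) y = -(k+1)(i+2+k) M^k y` says that the `M`-string of `y` never
ends, contradicting the nilpotency of `M`.
-/

open LinearMap (ker range)

section

attribute [local instance] LieRing.ofAssociativeRing

variable {K V : Type*} [Field K] [AddCommGroup V] [Module K V]

theorem lie_pow_eq_smul_of_lie_eq_smul {A : Type*} [Ring A] [Algebra K A] {Y X : A} {c : K}
    (h : ⁅Y, X⁆ = c • X) (n : ℕ) : ⁅Y, X ^ n⁆ = (n * c) • X ^ n := by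
  induction n with
  | zero => simp [Ring.lie_def]
  | succ n ih =>
    rw [Ring.lie_def] at h ih ⊢
    calc Y * X ^ (n + 1) - X ^ (n + 1) * Y
        = (Y * X ^ n - X ^ n * Y) * X + X ^ n * (Y * X - X * Y) := by noncomm_ring
      _ = ((n + 1 : ℕ) * c) • X ^ (n + 1) := by
        rw [ih, h, smul_mul_assoc, mul_smul_comm, ← pow_succ, ← add_smul]
        push_cast
        ring_nf

theorem apply_pow_of_lie_eq_smul {Y A : Module.End K V} {c : K} (h : ⁅Y, A⁆ = c • A)
    (n : ℕ) (v : V) : Y ((A ^ n) v) = (A ^ n) (Y v) + (n * c) • (A ^ n) v := by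
  have := LinearMap.congr_fun (lie_pow_eq_smul_of_lie_eq_smul h n) v
  rw [Ring.lie_def, LinearMap.sub_apply, Module.End.mul_apply, Module.End.mul_apply,
    LinearMap.smul_apply] at this
  rw [← this]
  abel

theorem isNilpotent_of_lie_eq_smul [CharZero K] {A : Type*} [Ring A] [Algebra K A]
    [FiniteDimensional K A] {Y X : A} {c : K} (hc : c ≠ 0) (h : ⁅Y, X⁆ = c • X) :
    IsNilpotent X := by
  by_contra hX
  have hli := (LieAlgebra.ad K A Y).eigenvectors_linearIndependent'
    (fun n : ℕ => (n : K) * c) (fun m n hmn => by simpa [hc] using hmn) (fun n => X ^ n)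
    fun n => ⟨Module.End.mem_eigenspace_iff.2 (lie_pow_eq_smul_of_lie_eq_smul h n),
      fun h0 => hX ⟨n, h0⟩⟩
  have := hli.finite
  exact not_finite ℕ

theorem Submodule.map_eq_self_of_forall_apply_eq_smul {S : Submodule K V} {f : Module.End K V}
    {a : K} (ha : a ≠ 0) (hf : ∀ v ∈ S, f v = a • v) : S.map f = S := by
  refine le_antisymm (Submodule.map_le_iff_le_comap.2 fun v hv => ?_)
    fun v hv => ⟨a⁻¹ • v, S.smul_mem _ hv, ?_⟩
  · rw [Submodule.mem_comap, hf v hv]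
    exact S.smul_mem a hv
  · rw [hf _ (S.smul_mem _ hv), smul_smul, mul_inv_cancel₀ ha, one_smul]

theorem apply_pow_right_eq_neg_one_pow_mul {B : V →ₗ[K] V →ₗ[K] K} {N : Module.End K V}
    (hN : ∀ u v, B (N u) v = -B u (N v)) (n : ℕ) (u v : V) :
    B u ((N ^ n) v) = (-1) ^ n * B ((N ^ n) u) v := by
  induction n generalizing v with
  | zero => simp
  | succ n ih =>
    have hv : (N ^ (n + 1)) v = (N ^ n) (N v) := by rw [pow_succ, Module.End.mul_apply]
    have hu : (N ^ (n + 1)) u = N ((N ^ n) u) := by rw [pow_succ', Module.End.mul_apply]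
    rw [hv, hu, ih, hN]
    ring

theorem apply_eq_zero_of_add_eigenvalues_ne_zero {B : V →ₗ[K] V →ₗ[K] K}
    {Y : Module.End K V} (hY : ∀ u v, B (Y u) v = -B u (Y v)) {u v : V} {a b : K}
    (hu : Y u = a • u) (hv : Y v = b • v) (hab : a + b ≠ 0) : B u v = 0 := by
  have := hY u v
  rw [hu, hv, map_smul, LinearMap.smul_apply, map_smul, smul_eq_mul, smul_eq_mul] at this
  exact (mul_eq_zero.1 (by linear_combination this : (a + b) * B u v = 0)).resolve_left hab

abbrev highestWeightSpace (M Y : Module.End K V) (μ : K) : Submodule K V :=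
  ker M ⊓ Module.End.eigenspace Y μ

namespace IsSl2Triple

variable {M Y N : Module.End K V}

theorem lie_h_f_smul (t : IsSl2Triple Y M N) : ⁅Y, N⁆ = (-2 : K) • N := by
  rw [neg_smul, t.lie_lie_smul_f K]

theorem h_e_apply (t : IsSl2Triple Y M N) (v : V) : Y (M v) = M (Y v) + (2 : K) • M v := by
  simpa using apply_pow_of_lie_eq_smul (t.lie_h_e_smul K) 1 v

theorem h_f_apply (t : IsSl2Triple Y M N) (v : V) : Y (N v) = N (Y v) - (2 : K) • N v := by
  simpa [sub_eq_add_neg] using apply_pow_of_lie_eq_smul t.lie_h_f_smul 1 v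

theorem e_f_apply (t : IsSl2Triple Y M N) (v : V) : M (N v) = N (M v) + Y v := by
  have := LinearMap.congr_fun t.lie_e_f v
  rw [Ring.lie_def, LinearMap.sub_apply, Module.End.mul_apply, Module.End.mul_apply] at this
  rw [← this]
  abel

theorem h_mapsTo_ker_e (t : IsSl2Triple Y M N) : ∀ v ∈ ker M, Y v ∈ ker M := fun v hv => by
  have := t.h_e_apply v
  rw [LinearMap.mem_ker.1 hv, map_zero, smul_zero, add_zero] at this
  exact this.symm

theorem h_mapsTo_ker_f (t : IsSl2Triple Y M N) : ∀ v ∈ ker N, Y v ∈ ker N := fun v hv => by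
  have := t.h_f_apply v
  rw [LinearMap.mem_ker.1 hv, map_zero, smul_zero, sub_zero] at this
  exact this.symm

theorem h_mapsTo_range_f (t : IsSl2Triple Y M N) : ∀ v ∈ range N, Y v ∈ range N := by
  rintro _ ⟨y, rfl⟩
  exact ⟨Y y - (2 : K) • y, by rw [t.h_f_apply, map_sub, map_smul]⟩

theorem e_pow_f_succ_apply (t : IsSl2Triple Y M N) {x : V} (hx : M x = 0) (n : ℕ) :
    M ((N ^ (n + 1)) x) = (n + 1 : K) • (N ^ n) (Y x - (n : K) • x) := by
  induction n with
  | zero => simp [t.e_f_apply, hx]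
  | succ n ih =>
    rw [pow_succ' N (n + 1), Module.End.mul_apply, t.e_f_apply, ih,
      apply_pow_of_lie_eq_smul t.lie_h_f_smul, map_smul, ← Module.End.mul_apply N, ← pow_succ']
    simp only [map_sub, map_smul]
    push_cast
    module

theorem dualMap (t : IsSl2Triple Y M N) :
    IsSl2Triple (-(Y.dualMap : Module.End K (Module.Dual K V))) (-M.dualMap) (-N.dualMap) where
  h_ne_zero h := t.h_ne_zero <| LinearMap.ext fun x =>
    (Module.forall_dual_apply_eq_zero_iff K (Y x)).1 fun φ => by
      simpa using LinearMap.congr_fun (LinearMap.congr_fun h φ) x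
  lie_e_f := by
    ext φ x
    simp [LieRing.of_associative_ring_bracket, t.e_f_apply]
  lie_h_e_nsmul := by
    ext φ x
    simp [LieRing.of_associative_ring_bracket, t.h_e_apply]
  lie_h_f_nsmul := by
    ext φ x
    simp [LieRing.of_associative_ring_bracket, t.h_f_apply]

end IsSl2Triple

variable [CharZero K]

theorem map_sub_smul_iSup_inf_highestWeightSpace {M Y : Module.End K V} (U : Submodule K V)
    (n : ℕ) :
    (⨆ (i : ℕ) (_ : i < n), U ⊓ highestWeightSpace M Y i).map (Y - (n : K) • 1) =
      ⨆ (i : ℕ) (_ : i < n), U ⊓ highestWeightSpace M Y i := by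
  simp only [Submodule.map_iSup]
  refine iSup_congr fun i => iSup_congr fun hi => Submodule.map_eq_self_of_forall_apply_eq_smul
    (sub_ne_zero.2 (Nat.cast_injective.ne hi.ne)) fun v hv => ?_
  rw [LinearMap.sub_apply, LinearMap.smul_apply, Module.End.one_apply,
    Module.End.mem_eigenspace_iff.1 hv.2.2, sub_smul]

namespace IsSl2Triple

variable {M Y N : Module.End K V}

theorem pow_f_apply_h_sub_eq_zero (t : IsSl2Triple Y M N) {x : V} (hx : M x = 0) {n : ℕ}
    (hn : (N ^ (n + 1)) x = 0) : (N ^ n) (Y x - (n : K) • x) = 0 := by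
  have := t.e_pow_f_succ_apply hx n
  rw [hn, map_zero, eq_comm, smul_eq_zero] at this
  exact this.resolve_left (Nat.cast_add_one_ne_zero n)

theorem mem_iSup_inf_highestWeightSpace_of_pow_f_apply_eq_zero (t : IsSl2Triple Y M N)
    {U : Submodule K V} (hUY : ∀ x ∈ U, Y x ∈ U) (hUM : U ≤ ker M) {n : ℕ} {x : V}
    (hxU : x ∈ U) (hxN : (N ^ n) x = 0) :
    x ∈ ⨆ (i : ℕ) (_ : i < n), U ⊓ highestWeightSpace M Y i := by
  induction n generalizing x with
  | zero => simp [show x = 0 by simpa using hxN]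
  | succ n ih =>
    set W := ⨆ (i : ℕ) (_ : i < n), U ⊓ highestWeightSpace M Y i
    have hWU : W ≤ U ⊓ ker M := iSup₂_le fun i _ => inf_le_inf_left U inf_le_left
    have hz : Y x - (n : K) • x ∈ W.map (Y - (n : K) • 1) := by
      rw [map_sub_smul_iSup_inf_highestWeightSpace]
      exact ih (U.sub_mem (hUY x hxU) (U.smul_mem _ hxU))
        (t.pow_f_apply_h_sub_eq_zero (hUM hxU) hxN)
    obtain ⟨w, hwW, hw⟩ := hz
    have hxw : x - w ∈ U ⊓ highestWeightSpace M Y n := by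
      refine ⟨U.sub_mem hxU (hWU hwW).1, LinearMap.mem_ker.2 ?_,
        Module.End.mem_eigenspace_iff.2 ?_⟩
      · rw [map_sub, LinearMap.mem_ker.1 (hUM hxU), LinearMap.mem_ker.1 (hWU hwW).2, sub_zero]
      · simp only [LinearMap.sub_apply, LinearMap.smul_apply, Module.End.one_apply] at hw
        rw [map_sub, smul_sub]
        linear_combination (norm := module) -hw
    have hW : W ≤ ⨆ (i : ℕ) (_ : i < n + 1), U ⊓ highestWeightSpace M Y i :=
      biSup_mono fun i hi => Nat.lt_succ_of_lt hi
    rw [← sub_add_cancel x w]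
    exact add_mem (le_iSup₂_of_le (f := fun i (_ : i < n + 1) => U ⊓ highestWeightSpace M Y i)
      n n.lt_succ_self le_rfl hxw) (hW hwW)

variable [FiniteDimensional K V]

theorem isNilpotent_e (t : IsSl2Triple Y M N) : IsNilpotent M :=
  isNilpotent_of_lie_eq_smul two_ne_zero (t.lie_h_e_smul K)

theorem isNilpotent_f (t : IsSl2Triple Y M N) : IsNilpotent N :=
  isNilpotent_of_lie_eq_smul (by norm_num) t.lie_h_f_smul

theorem pow_f_succ_apply_eq_zero (t : IsSl2Triple Y M N) {i : ℕ} {v : V}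
    (hv : v ∈ highestWeightSpace M Y i) : (N ^ (i + 1)) v = 0 := by
  rcases eq_or_ne v 0 with rfl | hv0
  · simp
  · have P : t.HasPrimitiveVectorWith v (i : K) :=
      ⟨hv0, Module.End.mem_eigenspace_iff.1 hv.2, LinearMap.mem_ker.1 hv.1⟩
    simpa using P.pow_toEnd_f_eq_zero_of_eq_nat rfl

theorem le_iSup_inf_highestWeightSpace (t : IsSl2Triple Y M N) {U : Submodule K V}
    (hUY : ∀ x ∈ U, Y x ∈ U) (hUM : U ≤ ker M) :
    U ≤ ⨆ i : ℕ, U ⊓ highestWeightSpace M Y i := by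
  obtain ⟨d, hd⟩ := t.isNilpotent_f
  have hle : ⨆ (i : ℕ) (_ : i < d), U ⊓ highestWeightSpace M Y i ≤
      ⨆ i : ℕ, U ⊓ highestWeightSpace M Y i :=
    iSup₂_le fun i _ => le_iSup (fun i : ℕ => U ⊓ highestWeightSpace M Y i) i
  intro x hx
  exact hle (t.mem_iSup_inf_highestWeightSpace_of_pow_f_apply_eq_zero hUY hUM hx (by simp [hd]))

theorem exists_eq_neg_nat_of_e_f_apply_eq_zero (t : IsSl2Triple Y M N) {y : V} (hy : y ≠ 0)
    {μ : K} (hYy : Y y = μ • y) (hMNy : M (N y) = 0) : ∃ n : ℕ, μ = -n := by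
  have hNM : ∀ v, N (M v) = M (N v) - Y v := fun v => eq_sub_of_add_eq (t.e_f_apply v).symm
  have hstep : ∀ k : ℕ, N ((M ^ (k + 1)) y) = (-((k + 1) * (μ + k)) : K) • (M ^ k) y := by
    intro k
    induction k with
    | zero => simp [hNM, hMNy, hYy]
    | succ k ih =>
      rw [pow_succ' M (k + 1), Module.End.mul_apply, hNM, ih, map_smul, ← Module.End.mul_apply M,
        ← pow_succ', apply_pow_of_lie_eq_smul (t.lie_h_e_smul K), hYy, map_smul]
      push_cast
      module
  obtain ⟨d, hd⟩ := t.isNilpotent_e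
  obtain ⟨n, hn, hn1⟩ := Nat.exists_not_and_succ_of_not_zero_of_exists
    (p := fun k => (M ^ k) y = 0) (by simpa using hy) ⟨d, by simp [hd]⟩
  refine ⟨n, ?_⟩
  have := hstep n
  rw [hn1, map_zero, eq_comm, smul_eq_zero_iff_left hn, neg_eq_zero, mul_eq_zero] at this
  exact eq_neg_of_add_eq_zero_left (this.resolve_left (Nat.cast_add_one_ne_zero n))

theorem eq_zero_of_e_f_apply_eq_zero (t : IsSl2Triple Y M N) {y : V} {n : ℕ} (hn : 0 < n)
    (hYy : Y y = (n : K) • y) (hMNy : M (N y) = 0) : y = 0 := by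
  by_contra hy
  obtain ⟨m, hm⟩ := t.exists_eq_neg_nat_of_e_f_apply_eq_zero hy hYy hMNy
  have : ((n + m : ℕ) : K) = 0 := by
    push_cast
    rw [hm]
    ring
  have := Nat.cast_eq_zero.1 this
  omega

theorem exists_f_apply_eq_and_h_apply_eq (t : IsSl2Triple Y M N) {p : V} (hp : p ∈ range N)
    {i : ℕ} (hYp : Y p = (i : K) • p) : ∃ y, N y = p ∧ Y y = ((i + 2 : ℕ) : K) • y := by
  obtain ⟨y₀, rfl⟩ := hp
  set c : K := ((i + 2 : ℕ) : K)
  let f : ker N →ₗ[K] ker N := (Y - c • 1).restrict fun v hv =>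
    sub_mem (t.h_mapsTo_ker_f v hv) (Submodule.smul_mem _ c hv)
  have hf : Function.Injective f := by
    refine (injective_iff_map_eq_zero f).2 fun w hw => Subtype.ext ?_
    have hYw : Y w = c • (w : V) := by
      simpa [f, sub_eq_zero] using congrArg Subtype.val hw
    exact t.eq_zero_of_e_f_apply_eq_zero (by omega) hYw (by simp [LinearMap.mem_ker.1 w.2])
  have hz : Y y₀ - c • y₀ ∈ ker N := by
    have := t.h_f_apply y₀
    rw [hYp] at this
    rw [LinearMap.mem_ker, map_sub, map_smul]
    simp only [c]
    push_cast
    linear_combination (norm := module) -this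
  obtain ⟨w, hw⟩ := LinearMap.injective_iff_surjective.1 hf ⟨_, hz⟩
  have hw' : Y w - c • (w : V) = Y y₀ - c • y₀ := by
    simpa [f] using congrArg Subtype.val hw
  refine ⟨y₀ - w, by simp [LinearMap.mem_ker.1 w.2], ?_⟩
  rw [map_sub, smul_sub]
  linear_combination (norm := module) -hw'

theorem ker_e_inf_range_f_eq_bot (t : IsSl2Triple Y M N) : ker M ⊓ range N = ⊥ := by
  have hUY : ∀ x ∈ ker M ⊓ range N, Y x ∈ ker M ⊓ range N := fun x ⟨hxM, hxN⟩ =>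
    ⟨t.h_mapsTo_ker_e x hxM, t.h_mapsTo_range_f x hxN⟩
  by_contra hU
  obtain ⟨i, hi⟩ : ∃ i : ℕ, ker M ⊓ range N ⊓ highestWeightSpace M Y i ≠ ⊥ := by
    by_contra! h
    exact hU (le_bot_iff.1 ((t.le_iSup_inf_highestWeightSpace hUY inf_le_left).trans
      (by simp [h])))
  obtain ⟨p, ⟨⟨hpM, hpN⟩, -, hpY⟩, hp0⟩ := (Submodule.ne_bot_iff _).1 hi
  obtain ⟨y, rfl, hYy⟩ :=
    t.exists_f_apply_eq_and_h_apply_eq hpN (Module.End.mem_eigenspace_iff.1 hpY)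
  exact hp0 (by rw [t.eq_zero_of_e_f_apply_eq_zero (by omega) hYy hpM, map_zero])

theorem ker_e_sup_range_f_eq_top (t : IsSl2Triple Y M N) : ker M ⊔ range N = ⊤ := by
  have := t.dualMap.symm.ker_e_inf_range_f_eq_bot
  rwa [LinearMap.ker_neg, LinearMap.range_neg, LinearMap.ker_dualMap_eq_dualAnnihilator_range,
    LinearMap.range_dualMap_eq_dualAnnihilator_ker, ← Submodule.dualAnnihilator_sup_eq,
    Submodule.dualAnnihilator_eq_bot_iff, sup_comm] at this

theorem iSup_map_pow_f_ker_e_eq_top (t : IsSl2Triple Y M N) :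
    ⨆ j : ℕ, (ker M).map (N ^ j) = ⊤ := by
  have key : ∀ n : ℕ, ⊤ ≤ (⨆ j : ℕ, (ker M).map (N ^ j)) ⊔ range (N ^ n) := by
    intro n
    induction n with
    | zero => simp [Module.End.one_eq_id]
    | succ n ih =>
      refine ih.trans (sup_le le_sup_left ?_)
      calc range (N ^ n) = (ker M ⊔ range N).map (N ^ n) := by
            rw [t.ker_e_sup_range_f_eq_top, Submodule.map_top]
        _ = (ker M).map (N ^ n) ⊔ range (N ^ (n + 1)) := by
            rw [Submodule.map_sup, ← LinearMap.range_comp, pow_succ, Module.End.mul_eq_comp]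
        _ ≤ _ := sup_le_sup_right (le_iSup (fun j => (ker M).map (N ^ j)) n) _
  obtain ⟨d, hd⟩ := t.isNilpotent_f
  simpa [hd] using key d

theorem iSup_map_pow_f_highestWeightSpace_eq_top (t : IsSl2Triple Y M N) :
    ⨆ (i : ℕ) (j : ℕ), (highestWeightSpace M Y i).map (N ^ j) = ⊤ := by
  have hker : ker M ≤ ⨆ i : ℕ, highestWeightSpace M Y i := by
    simpa using t.le_iSup_inf_highestWeightSpace t.h_mapsTo_ker_e le_rfl
  rw [eq_top_iff, ← t.iSup_map_pow_f_ker_e_eq_top, iSup_comm]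
  exact iSup_mono fun j => (Submodule.map_mono hker).trans_eq (Submodule.map_iSup _ _)

theorem apply_pow_f_eq_zero_of_mem_highestWeightSpace (t : IsSl2Triple Y M N)
    {B : V →ₗ[K] V →ₗ[K] K} (hY : ∀ u v, B (Y u) v = -B u (Y v))
    (hN : ∀ u v, B (N u) v = -B u (N v)) {ℓ : ℕ} {u : V}
    (hu : u ∈ highestWeightSpace M Y ℓ)
    (hB : ∀ v ∈ highestWeightSpace M Y ℓ, B u ((N ^ ℓ) v) = 0) {i : ℕ} {q : V}
    (hq : q ∈ highestWeightSpace M Y i) (j : ℕ) : B u ((N ^ j) q) = 0 := by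
  by_cases hij : i + ℓ = 2 * j
  · rcases lt_trichotomy i ℓ with hlt | rfl | hgt
    · obtain ⟨k, rfl⟩ : ∃ k, j = k + (i + 1) := ⟨j - (i + 1), by omega⟩
      rw [pow_add, Module.End.mul_apply, t.pow_f_succ_apply_eq_zero hq, map_zero, map_zero]
    · obtain rfl : j = i := by omega
      exact hB q hq
    · obtain ⟨k, rfl⟩ : ∃ k, j = k + (ℓ + 1) := ⟨j - (ℓ + 1), by omega⟩
      rw [apply_pow_right_eq_neg_one_pow_mul hN, pow_add N, Module.End.mul_apply,
        t.pow_f_succ_apply_eq_zero hu, map_zero, map_zero, LinearMap.zero_apply, mul_zero]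
  · refine apply_eq_zero_of_add_eigenvalues_ne_zero hY (Module.End.mem_eigenspace_iff.1 hu.2)
      (by rw [apply_pow_of_lie_eq_smul t.lie_h_f_smul, Module.End.mem_eigenspace_iff.1 hq.2,
        map_smul, ← add_smul]) fun h => hij ?_
    have : ((i + ℓ : ℕ) : K) = ((2 * j : ℕ) : K) := by
      push_cast
      linear_combination h
    exact_mod_cast this

end IsSl2Triple

end

theorem Qell_nondegenerate_on_highest_weight_space_general
    (V : Type*) [AddCommGroup V] [Module ℝ V] [FiniteDimensional ℝ V]
    (Q : V →ₗ[ℝ] V →ₗ[ℝ] ℝ)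
    (hnondeg : ∀ u : V, (∀ v : V, Q u v = 0) → u = 0)
    (M Y N : Module.End ℝ V)
    (hYskew : ∀ u v : V, Q (Y u) v = -Q u (Y v))
    (hNskew : ∀ u v : V, Q (N u) v = -Q u (N v))
    (h1 : ⁅Y, M⁆ = (2 : ℝ) • M)
    (h2 : ⁅Y, N⁆ = -((2 : ℝ) • N))
    (h3 : ⁅M, N⁆ = Y)
    (ℓ : ℕ) :
    ∀ u ∈ LinearMap.ker M ⊓ Module.End.eigenspace Y (ℓ : ℝ),
      (∀ v ∈ LinearMap.ker M ⊓ Module.End.eigenspace Y (ℓ : ℝ),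
        Q u ((N ^ ℓ) v) = 0) → u = 0 := by
  intro u hu hQ
  -- `IsSl2Triple` requires `Y ≠ 0`; if `Y = 0` then `M = 0` and `P(ℓ)` is `V` or `0`.
  rcases eq_or_ne Y 0 with rfl | hY
  · have hM : M = 0 := by
      rw [Ring.lie_def, zero_mul, mul_zero, sub_zero, eq_comm, smul_eq_zero] at h1
      exact h1.resolve_left two_ne_zero
    subst hM
    rcases eq_or_ne ℓ 0 with rfl | hℓ
    · exact hnondeg u fun v => by simpa using hQ v (by simp)
    · simpa [hℓ, eq_comm] using Module.End.mem_eigenspace_iff.1 hu.2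
  let _ : LieRing (Module.End ℝ V) := LieRing.ofAssociativeRing
  have t : IsSl2Triple Y M N :=
    ⟨hY, h3, by rw [h1, two_smul, two_nsmul], by rw [h2, two_smul, two_nsmul]⟩
  have hle : ⨆ (i : ℕ) (j : ℕ), (highestWeightSpace M Y i).map (N ^ j) ≤ ker (Q u) :=
    iSup₂_le fun i j => Submodule.map_le_iff_le_comap.2 fun q hq =>
      t.apply_pow_f_eq_zero_of_mem_highestWeightSpace hYskew hNskew hu hQ hq j
  rw [t.iSup_map_pow_f_highestWeightSpace_eq_top, top_le_iff] at hle
  exact hnondeg u fun v => LinearMap.mem_ker.1 (hle ▸ Submodule.mem_top)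

/-- **Nondegeneracy of `Q_ℓ` on the highest weight space.**
Let `Q` be a nondegenerate `(-1)^k`-symmetric bilinear form on a finite-dimensional real
vector space `V`, and let `{M,Y,N}` be a standard triple of `Q`-skew endomorphisms with
nilnegative element `N`.  Then for each `ℓ ≥ 0` the form `Q_ℓ(u,v) = Q(u, N^ℓ v)`
restricted to the highest weight space `P(ℓ) = ker M ∩ {Y = ℓ}` is nondegenerate. -/
theorem Qell_nondegenerate_on_highest_weight_space
    (V : Type*) [AddCommGroup V] [Module ℝ V] [FiniteDimensional ℝ V]
    (k : ℕ) (Q : V →ₗ[ℝ] V →ₗ[ℝ] ℝ)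
    (hnondeg : ∀ u : V, (∀ v : V, Q u v = 0) → u = 0)
    (hsymm : ∀ u v : V, Q u v = (-1 : ℝ) ^ k * Q v u)
    (M Y N : Module.End ℝ V)
    (hMskew : ∀ u v : V, Q (M u) v = -Q u (M v))
    (hYskew : ∀ u v : V, Q (Y u) v = -Q u (Y v))
    (hNskew : ∀ u v : V, Q (N u) v = -Q u (N v))
    (h1 : ⁅Y, M⁆ = (2 : ℝ) • M)
    (h2 : ⁅Y, N⁆ = -((2 : ℝ) • N))
    (h3 : ⁅M, N⁆ = Y)
    (ℓ : ℕ) :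
    ∀ u ∈ LinearMap.ker M ⊓ Module.End.eigenspace Y (ℓ : ℝ),
      (∀ v ∈ LinearMap.ker M ⊓ Module.End.eigenspace Y (ℓ : ℝ),
        Q u ((N ^ ℓ) v) = 0) → u = 0 :=
  Qell_nondegenerate_on_highest_weight_space_general V Q hnondeg M Y N hYskew hNskew h1 h2 h3 ℓ
end
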